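/- The polynomial Q₂(T) is irreducible over ℚ, and there is no polynomial g ∈ ℤ[T] and no integer k ≥ 2 such that Q₂(T) = g(T^k). -/

import Mathlib

/-!
Modulo 5, `Q₂` is a product of two irreducible quintics; modulo 2, of irreducible factors of
degrees 3, 3 and 4. A monic factor over `ℤ` reduces to a factor modulo each prime, so its degree
is a sum of a sub-multiset of `{5, 5}` and of `{3, 3, 4}`, which forces it to be `0` or `10`.
Each factor over `𝔽_p` of degree `n` is certified irreducible by a Bézout identity with
`X ^ (p ^ m) - X`, which is divisible by every irreducible of degree dividing `m`; taking `m`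
divisible by all of `1, …, n / 2` leaves no room for a proper factor. The second claim holds
because the coefficients of `T⁹` and `T⁸` are nonzero and `gcd(9, 8) = 1`.
-/
open Polynomial

/-- The Weil polynomial `Q₂(T) = Q₁(J(X)/𝔽₉, T)` of the intermediate Jacobian of the
cubic threefold `X` of the paper over `𝔽₉`. -/
noncomputable def weilQ2 : Polynomial ℤ :=
  X ^ 10 - 6 * X ^ 9 + 23 * X ^ 8 - 76 * X ^ 7 + 221 * X ^ 6 - 535 * X ^ 5
    + 1989 * X ^ 4 - 6156 * X ^ 3 + 16767 * X ^ 2 - 39366 * X + 59049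

namespace Polynomial

section Field

variable {K : Type*} [Field K]

theorem exists_sublist_natDegree_eq_sum_of_dvd_prod {l : List K[X]}
    (hl : ∀ p ∈ l, Irreducible p) {q : K[X]} (hq : q ∣ l.prod) :
    ∃ s : List ℕ, s.Sublist (l.map natDegree) ∧ q.natDegree = s.sum := by
  induction l generalizing q with
  | nil => exact ⟨[], .slnil, natDegree_eq_zero_of_isUnit (isUnit_of_dvd_one hq)⟩
  | cons p l ih =>
    have hp : Irreducible p := hl p List.mem_cons_self
    have hl' : ∀ r ∈ l, Irreducible r := fun r hr => hl r (List.mem_cons_of_mem _ hr)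
    rw [List.prod_cons] at hq
    by_cases hpq : p ∣ q
    · obtain ⟨c, rfl⟩ := hpq
      have hc : c ∣ l.prod := (mul_dvd_mul_iff_left hp.ne_zero).mp hq
      have hc0 : c ≠ 0 :=
        ne_zero_of_dvd_ne_zero (List.prod_ne_zero fun h0 => not_irreducible_zero (hl' 0 h0)) hc
      obtain ⟨s, hs, hcs⟩ := ih hl' hc
      exact ⟨p.natDegree :: s, hs.cons_cons _, by
        rw [natDegree_mul hp.ne_zero hc0, hcs, List.sum_cons]⟩
    · have hcop : IsCoprime q p := (hp.coprime_iff_not_dvd.mpr hpq).symm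
      obtain ⟨s, hs, hqs⟩ := ih hl' (hcop.dvd_of_dvd_mul_left hq)
      exact ⟨s, hs.cons _, hqs⟩

theorem natDegree_mem_sublists_sum_of_dvd_of_map_eq_prod {R : Type*} [CommSemiring R]
    (φ : R →+* K) {f q : R[X]} (hq : q.Monic) (hqf : q ∣ f) {l : List K[X]}
    (hl : ∀ p ∈ l, Irreducible p) (hf : f.map φ = l.prod) :
    q.natDegree ∈ (l.map natDegree).sublists.map List.sum := by
  obtain ⟨s, hs, hqs⟩ :=
    exists_sublist_natDegree_eq_sum_of_dvd_prod hl (hf ▸ Polynomial.map_dvd φ hqf)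
  rw [hq.natDegree_map] at hqs
  exact List.mem_map.mpr ⟨s, List.mem_sublists.mpr hs, hqs.symm⟩

theorem irreducible_of_isCoprime_X_pow_card_pow_sub_X [Finite K] {f : K[X]} {n m : ℕ}
    (hf : f.natDegree = n) (hn : 0 < n) (hm : ∀ d ∈ Finset.Ioc 0 (n / 2), d ∣ m)
    (hcop : IsCoprime f (X ^ Nat.card K ^ m - X)) : Irreducible f := by
  subst hf
  have hf0 : f ≠ 0 := ne_zero_of_natDegree_gt hn
  rw [irreducible_iff_lt_natDegree_lt hf0 fun hu => hn.ne' (natDegree_eq_zero_of_isUnit hu)]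
  intro q _ hq hqf
  have hq0 : q ≠ 0 := ne_zero_of_dvd_ne_zero hf0 hqf
  have hqu : ¬IsUnit q := fun hu =>
    (Finset.mem_Ioc.mp hq).1.ne' (natDegree_eq_zero_of_isUnit hu)
  obtain ⟨g, hg, hgq⟩ := WfDvdMonoid.exists_irreducible_factor hqu hq0
  have hgdeg : g.natDegree ∈ Finset.Ioc 0 (f.natDegree / 2) :=
    Finset.mem_Ioc.mpr ⟨hg.natDegree_pos,
      (natDegree_le_of_dvd hgq hq0).trans (Finset.mem_Ioc.mp hq).2⟩
  have hgX : g ∣ X ^ Nat.card K ^ m - X :=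
    hg.natDegree_dvd_iff_dvd_X_pow_card_pow_sub_X.mp (hm _ hgdeg)
  exact hg.not_isUnit (hcop.isUnit_of_dvd' (hgq.trans hqf) hgX)

end Field

theorem Monic.irreducible_of_map_eq_prod {R K L : Type*} [CommSemiring R] [NoZeroDivisors R]
    [Field K] [Field L] {f : R[X]} (hf : f.Monic) (hf1 : f ≠ 1) (φ : R →+* K) (ψ : R →+* L)
    {l₁ : List K[X]} {l₂ : List L[X]} (hl₁ : ∀ p ∈ l₁, Irreducible p)
    (hl₂ : ∀ p ∈ l₂, Irreducible p) (hf₁ : f.map φ = l₁.prod) (hf₂ : f.map ψ = l₂.prod)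
    (hdeg : ∀ n ∈ (l₁.map natDegree).sublists.map List.sum,
      n ∈ (l₂.map natDegree).sublists.map List.sum → n ∉ Finset.Ioc 0 (f.natDegree / 2)) :
    Irreducible f := by
  rw [hf.irreducible_iff_lt_natDegree_lt hf1]
  intro q hq hqdeg hqf
  exact hdeg _ (natDegree_mem_sublists_sum_of_dvd_of_map_eq_prod φ hq hqf hl₁ hf₁)
    (natDegree_mem_sublists_sum_of_dvd_of_map_eq_prod ψ hq hqf hl₂ hf₂) hqdeg

theorem dvd_of_coeff_expand_ne_zero {R : Type*} [CommSemiring R] {k n : ℕ} (hk : 0 < k)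
    {g : R[X]} (h : (expand R k g).coeff n ≠ 0) : k ∣ n := by
  rw [coeff_expand hk] at h
  by_contra hkn
  exact h (if_neg hkn)

end Polynomial

instance : Fact (Nat.Prime 5) := ⟨Nat.prime_five⟩

theorem weilQ2_monic : weilQ2.Monic := by
  unfold weilQ2; monicity!

theorem weilQ2_natDegree : weilQ2.natDegree = 10 := by
  unfold weilQ2; compute_degree!

theorem weilQ2_factorization_mod_five : ∃ l : List (ZMod 5)[X], (∀ p ∈ l, Irreducible p) ∧
    l.map natDegree = [5, 5] ∧ weilQ2.map (Int.castRingHom (ZMod 5)) = l.prod := by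
  refine ⟨[X ^ 5 + 3 * X ^ 3 + X + 1, X ^ 5 + 4 * X ^ 4 + 2 * X ^ 2 + 4], ?_, ?_, ?_⟩
  · simp only [List.mem_cons, List.not_mem_nil, or_false, forall_eq_or_imp, forall_eq]
    constructor
    · refine irreducible_of_isCoprime_X_pow_card_pow_sub_X (n := 5) (m := 2) (by compute_degree!)
        (by norm_num) (by decide) ⟨X ^ 24 + 4 * X ^ 23 + 4 * X ^ 20 + 4 * X ^ 18 + 4 * X ^ 16
          + X ^ 15 + 4 * X ^ 14 + 3 * X ^ 13 + 4 * X ^ 12 + X ^ 11 + 3 * X ^ 10 + 4 * X ^ 8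
          + 4 * X ^ 6 + 2 * X ^ 5 + 4 * X ^ 4 + 4 * X ^ 2 + 4 * X + 1,
          4 * X ^ 4 + X ^ 3 + 2 * X ^ 2 + 3 * X, ?_⟩
      rw [Nat.card_zmod]; ring_nf; reduce_mod_char
    · refine irreducible_of_isCoprime_X_pow_card_pow_sub_X (n := 5) (m := 2) (by compute_degree!)
        (by norm_num) (by decide) ⟨X ^ 24 + 4 * X ^ 23 + X ^ 20 + 2 * X ^ 19 + X ^ 18
          + 4 * X ^ 17 + 4 * X ^ 15 + 3 * X ^ 14 + 4 * X ^ 13 + 4 * X ^ 11 + 3 * X ^ 9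
          + 4 * X ^ 8 + 4 * X ^ 7 + 2 * X ^ 6 + 4 * X ^ 5 + 4 * X ^ 4 + 4 * X ^ 3 + 4 * X + 4,
          4 * X ^ 4 + 2 * X ^ 3 + 4 * X ^ 2 + 3 * X + 1, ?_⟩
      rw [Nat.card_zmod]; ring_nf; reduce_mod_char
  · simp only [List.map_cons, List.map_nil, List.cons.injEq, and_true]
    exact ⟨by compute_degree!, by compute_degree!⟩
  · simp only [weilQ2, List.prod_cons, List.prod_nil, mul_one, Polynomial.map_add,
      Polynomial.map_sub, Polynomial.map_mul, Polynomial.map_pow, map_X, Polynomial.map_ofNat]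
    ring_nf; reduce_mod_char; ring

theorem weilQ2_factorization_mod_two : ∃ l : List (ZMod 2)[X], (∀ p ∈ l, Irreducible p) ∧
    l.map natDegree = [3, 3, 4] ∧ weilQ2.map (Int.castRingHom (ZMod 2)) = l.prod := by
  refine ⟨[X ^ 3 + X ^ 2 + 1, X ^ 3 + X + 1, X ^ 4 + X ^ 3 + X ^ 2 + X + 1], ?_, ?_, ?_⟩
  · simp only [List.mem_cons, List.not_mem_nil, or_false, forall_eq_or_imp, forall_eq]
    refine ⟨?_, ?_, ?_⟩
    · refine irreducible_of_isCoprime_X_pow_card_pow_sub_X (n := 3) (m := 1) (by compute_degree!)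
        (by norm_num) (by decide) ⟨1, X, ?_⟩
      rw [Nat.card_zmod]; ring_nf; reduce_mod_char
    · refine irreducible_of_isCoprime_X_pow_card_pow_sub_X (n := 3) (m := 1) (by compute_degree!)
        (by norm_num) (by decide) ⟨1, X + 1, ?_⟩
      rw [Nat.card_zmod]; ring_nf; reduce_mod_char
    · refine irreducible_of_isCoprime_X_pow_card_pow_sub_X (n := 4) (m := 2) (by compute_degree!)
        (by norm_num) (by decide) ⟨X ^ 3 + X + 1, X ^ 3 + X ^ 2, ?_⟩
      rw [Nat.card_zmod]; ring_nf; reduce_mod_char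
  · simp only [List.map_cons, List.map_nil, List.cons.injEq, and_true]
    exact ⟨by compute_degree!, by compute_degree!, by compute_degree!⟩
  · simp only [weilQ2, List.prod_cons, List.prod_nil, mul_one, Polynomial.map_add,
      Polynomial.map_sub, Polynomial.map_mul, Polynomial.map_pow, map_X, Polynomial.map_ofNat]
    ring_nf; reduce_mod_char

theorem weilQ2_irreducible : Irreducible weilQ2 := by
  obtain ⟨l₅, hl₅, hdeg₅, h₅⟩ := weilQ2_factorization_mod_five
  obtain ⟨l₂, hl₂, hdeg₂, h₂⟩ := weilQ2_factorization_mod_two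
  refine weilQ2_monic.irreducible_of_map_eq_prod ?_ _ _ hl₅ hl₂ h₅ h₂ ?_
  · intro h1
    simpa [h1] using weilQ2_natDegree
  · rw [hdeg₅, hdeg₂, weilQ2_natDegree]
    decide

/-- `Q₂(T)` is irreducible over `ℚ`, and there is no `g ∈ ℤ[T]` and no integer `k ≥ 2`
with `Q₂(T) = g(T^k)`. -/
theorem weilQ2_irreducible_and_not_in_ZTk :
    Irreducible (weilQ2.map (Int.castRingHom ℚ)) ∧
      ∀ (g : Polynomial ℤ) (k : ℕ), 2 ≤ k → weilQ2 ≠ Polynomial.expand ℤ k g := by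
  refine ⟨(IsPrimitive.Int.irreducible_iff_irreducible_map_cast
    weilQ2_monic.isPrimitive).mp weilQ2_irreducible, fun g k hk h => ?_⟩
  have hk9 : k ∣ 9 := dvd_of_coeff_expand_ne_zero (by omega) (g := g) <| by
    rw [← h]; simp [weilQ2, coeff_X_pow, coeff_X]
  have hk8 : k ∣ 8 := dvd_of_coeff_expand_ne_zero (by omega) (g := g) <| by
    rw [← h]; simp [weilQ2, coeff_X_pow, coeff_X]
  have := Nat.le_of_dvd one_pos (Nat.dvd_gcd hk9 hk8 : k ∣ 1)
  omega
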